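/- For every ξ ∈ ℝ, every k ∈ ℤ and every real θ > 0, one has ∫₀^{π/2} ρ_{ξ,k}(θ·sin²t) dt = e^{(ξ+ik)·θ}. -/

import Mathlib

/-- `ρ_{ξ,k}(x) = (2/π)(2 w e^{wx} √x ∫₀^{√x} e^{-w u²} du + 1)` with `w = ξ + i k`. -/
noncomputable def rho (ξ : ℝ) (k : ℤ) (x : ℝ) : ℂ :=
  (2 / (Real.pi : ℂ)) *
    (2 * ((ξ : ℂ) + (k : ℂ) * Complex.I) *
        Complex.exp (((ξ : ℂ) + (k : ℂ) * Complex.I) * (x : ℂ)) * (Real.sqrt x : ℂ) *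
        (∫ u in (0:ℝ)..Real.sqrt x,
          Complex.exp (-(((ξ : ℂ) + (k : ℂ) * Complex.I)) * (u : ℂ) ^ 2)) + 1)

/-!
Write `w = ξ + i k`, `r = √θ` and `E(y) = ∫₀^y e^{-w u²} du`. On `[0, π/2]` the integrand equals
`(4/π) e^{w r²} F(r, t)` with `F(r, t) = w r sin t e^{-w r² cos² t} E(r sin t) + e^{-w r²}/2`.
A direct computation gives `∂_r F = ∂_t G` for `G(r, t) = -w cos t e^{-w r² cos² t} E(r sin t)`,
which vanishes at `t = 0` and `t = π/2`. Integrating this identity over `[0, r] × [0, π/2]` with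
Fubini shows that `∫₀^{π/2} F(r, t) dt` does not depend on `r`; at `r = 0` it is `π/4`.
-/

open Real Set intervalIntegral MeasureTheory
open scoped Complex

lemma integral_sub_eq_integral_sub_of_hasDerivAt
    {E : Type*} [NormedAddCommGroup E] [NormedSpace ℝ E] [CompleteSpace E]
    {f g D : ℝ → ℝ → E} (hD : Continuous (Function.uncurry D))
    (hf : ∀ r t, HasDerivAt (f · t) (D r t) r) (hg : ∀ r t, HasDerivAt (g r ·) (D r t) t)
    (r₀ r₁ a b : ℝ) :
    ∫ t in a..b, (f r₁ t - f r₀ t) = ∫ r in r₀..r₁, (g r b - g r a) := by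
  have hD_swap : IntegrableOn (fun p : ℝ × ℝ ↦ D p.2 p.1) (uIoc a b ×ˢ uIoc r₀ r₁) :=
    ((hD.comp continuous_swap).continuousOn.integrableOn_compact
      (isCompact_uIcc.prod isCompact_uIcc)).mono_set
      (prod_mono uIoc_subset_uIcc uIoc_subset_uIcc)
  calc ∫ t in a..b, (f r₁ t - f r₀ t)
      = ∫ t in a..b, ∫ r in r₀..r₁, D r t := integral_congr fun t _ ↦
        (integral_eq_sub_of_hasDerivAt (fun r _ ↦ hf r t)
          ((hD.comp (Continuous.prodMk_left t)).intervalIntegrable _ _)).symm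
    _ = ∫ r in r₀..r₁, ∫ t in a..b, D r t := intervalIntegral_intervalIntegral_swap hD_swap
    _ = ∫ r in r₀..r₁, (g r b - g r a) := integral_congr fun r _ ↦
        integral_eq_sub_of_hasDerivAt (fun t _ ↦ hg r t)
          ((hD.comp (Continuous.prodMk_right r)).intervalIntegrable _ _)

noncomputable def gaussPrimitive (w : ℂ) (y : ℝ) : ℂ := ∫ u in (0:ℝ)..y, cexp (-w * u ^ 2)

lemma hasDerivAt_gaussPrimitive (w : ℂ) (y : ℝ) :
    HasDerivAt (gaussPrimitive w) (cexp (-w * y ^ 2)) y :=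
  have hcont : Continuous fun u : ℝ ↦ cexp (-w * u ^ 2) := by fun_prop
  integral_hasDerivAt_right (hcont.intervalIntegrable _ _) (hcont.stronglyMeasurableAtFilter _ _)
    hcont.continuousAt

@[fun_prop]
lemma continuous_gaussPrimitive (w : ℂ) : Continuous (gaussPrimitive w) :=
  continuous_iff_continuousAt.2 fun y ↦ (hasDerivAt_gaussPrimitive w y).continuousAt

@[simp]
lemma gaussPrimitive_zero (w : ℂ) : gaussPrimitive w 0 = 0 := integral_same

lemma ofReal_sin_sq_add_ofReal_cos_sq (t : ℝ) : (sin t : ℂ) ^ 2 + (cos t : ℂ) ^ 2 = 1 := by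
  norm_cast
  exact sin_sq_add_cos_sq t

lemma cexp_neg_mul_sq_mul_sin_mul_cexp (w : ℂ) (r t : ℝ) :
    cexp (-w * (r * sin t) ^ 2) * cexp (-w * r ^ 2 * cos t ^ 2) = cexp (-w * r ^ 2) := by
  rw [← Complex.exp_add]
  congr 1
  linear_combination (-w * r ^ 2) * ofReal_sin_sq_add_ofReal_cos_sq t

section Potential

variable (w : ℂ)

noncomputable def rhoPotential (r t : ℝ) : ℂ :=
  w * (r * sin t : ℝ) * cexp (-w * r ^ 2 * cos t ^ 2) * gaussPrimitive w (r * sin t)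
    + cexp (-w * r ^ 2) / 2

noncomputable def rhoFlux (r t : ℝ) : ℂ :=
  -w * cos t * cexp (-w * r ^ 2 * cos t ^ 2) * gaussPrimitive w (r * sin t)

noncomputable def rhoPotentialDeriv (r t : ℝ) : ℂ :=
  w * sin t * (1 - 2 * w * r ^ 2 * cos t ^ 2) * cexp (-w * r ^ 2 * cos t ^ 2)
      * gaussPrimitive w (r * sin t)
    - w * r * cos t ^ 2 * cexp (-w * r ^ 2)

lemma continuous_rhoPotentialDeriv : Continuous (Function.uncurry (rhoPotentialDeriv w)) := by
  unfold rhoPotentialDeriv Function.uncurry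
  fun_prop

lemma hasDerivAt_rhoPotential (r t : ℝ) :
    HasDerivAt (rhoPotential w · t) (rhoPotentialDeriv w r t) r := by
  have hr : HasDerivAt (fun r : ℝ ↦ (r : ℂ)) 1 r := hasDerivAt_id r |>.ofReal_comp
  have hrs : HasDerivAt (fun r : ℝ ↦ r * sin t) (sin t) r := by
    simpa using (hasDerivAt_id r).mul_const (sin t)
  have hE := (hasDerivAt_gaussPrimitive w (r * sin t)).scomp r hrs
  have := (((hrs.ofReal_comp.const_mul w).mul
    ((hr.pow 2).const_mul (-w) |>.mul_const ((cos t : ℂ) ^ 2) |>.cexp)).mul hE).add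
    ((hr.pow 2).const_mul (-w) |>.cexp |>.div_const 2)
  refine this.congr_deriv ?_
  simp only [rhoPotentialDeriv, Pi.pow_apply, Pi.mul_apply, Function.comp_apply,
    Complex.real_smul, Complex.ofReal_mul]
  linear_combination (w * r * sin t ^ 2 : ℂ) * cexp_neg_mul_sq_mul_sin_mul_cexp w r t
    + (w * r * cexp (-w * r ^ 2)) * ofReal_sin_sq_add_ofReal_cos_sq t

lemma hasDerivAt_rhoFlux (r t : ℝ) :
    HasDerivAt (rhoFlux w r ·) (rhoPotentialDeriv w r t) t := by
  have hcos : HasDerivAt (fun t : ℝ ↦ (cos t : ℂ)) (-sin t : ℝ) t := (hasDerivAt_cos t).ofReal_comp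
  have hrs : HasDerivAt (fun t : ℝ ↦ r * sin t) (r * cos t) t := (hasDerivAt_sin t).const_mul r
  have hE := (hasDerivAt_gaussPrimitive w (r * sin t)).scomp t hrs
  have := ((hcos.const_mul (-w)).mul ((hcos.pow 2).const_mul (-w * r ^ 2) |>.cexp)).mul hE
  refine this.congr_deriv ?_
  simp only [rhoPotentialDeriv, Pi.pow_apply, Pi.mul_apply, Function.comp_apply,
    Complex.real_smul, Complex.ofReal_mul, Complex.ofReal_neg]
  linear_combination (-w * r * cos t ^ 2 : ℂ) * cexp_neg_mul_sq_mul_sin_mul_cexp w r t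

end Potential

lemma integral_rhoPotential (w : ℂ) (R : ℝ) : ∫ t in 0..π / 2, rhoPotential w R t = π / 4 := by
  have hcont : Continuous (rhoPotential w R) := by unfold rhoPotential; fun_prop
  have key := integral_sub_eq_integral_sub_of_hasDerivAt (continuous_rhoPotentialDeriv w)
    (hasDerivAt_rhoPotential w) (hasDerivAt_rhoFlux w) 0 R 0 (π / 2)
  have h_left : ∀ t, rhoPotential w 0 t = 1 / 2 := by simp [rhoPotential]
  have h_flux : ∀ r, rhoFlux w r (π / 2) - rhoFlux w r 0 = 0 := by simp [rhoFlux]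
  simp only [h_left, h_flux, intervalIntegral.integral_zero] at key
  rw [intervalIntegral.integral_sub (hcont.intervalIntegrable _ _) intervalIntegrable_const,
    sub_eq_zero] at key
  rw [key, intervalIntegral.integral_const]
  simp only [sub_zero, Complex.real_smul]
  push_cast
  ring

lemma rho_mul_sin_sq (ξ : ℝ) (k : ℤ) {r t : ℝ} (hr : 0 ≤ r) (ht : 0 ≤ sin t) :
    rho ξ k ((r * sin t) ^ 2) =
      4 / π * cexp ((ξ + k * Complex.I) * r ^ 2) * rhoPotential (ξ + k * Complex.I) r t := by
  rw [rho, sqrt_sq (mul_nonneg hr ht), rhoPotential, gaussPrimitive]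
  set w : ℂ := ξ + k * Complex.I
  have hexp : cexp (w * (r * sin t) ^ 2) = cexp (w * r ^ 2) * cexp (-w * r ^ 2 * cos t ^ 2) := by
    rw [← Complex.exp_add]
    congr 1
    linear_combination (w * r ^ 2) * ofReal_sin_sq_add_ofReal_cos_sq t
  have hinv : cexp (w * r ^ 2) * cexp (-w * r ^ 2) = 1 := by
    rw [← Complex.exp_add]
    simp
  simp only [Complex.ofReal_mul, Complex.ofReal_pow]
  rw [hexp]
  linear_combination (-2 / π : ℂ) * hinv

/-- `A(ρ_{ξ,k})(θ) = e^{(ξ+ik)θ}` for every `θ > 0`. -/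
theorem stmt14 (ξ : ℝ) (k : ℤ) (θ : ℝ) (hθ : 0 < θ) :
    (∫ t in (0:ℝ)..(Real.pi/2), rho ξ k (θ * Real.sin t ^ 2)) =
      Complex.exp (((ξ : ℂ) + (k : ℂ) * Complex.I) * (θ : ℂ)) := by
  have hρ : ∀ t ∈ uIcc 0 (π / 2), rho ξ k (θ * sin t ^ 2) =
      4 / π * cexp ((ξ + k * Complex.I) * θ) * rhoPotential (ξ + k * Complex.I) √θ t := by
    intro t ht
    rw [uIcc_of_le (by positivity)] at ht
    have hsin : 0 ≤ sin t := sin_nonneg_of_nonneg_of_le_pi ht.1 (by linarith [ht.2, pi_pos])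
    rw [show θ * sin t ^ 2 = (√θ * sin t) ^ 2 by rw [mul_pow, sq_sqrt hθ.le],
      rho_mul_sin_sq ξ k (sqrt_nonneg θ) hsin, ← Complex.ofReal_pow, sq_sqrt hθ.le]
  rw [integral_congr hρ, intervalIntegral.integral_const_mul, integral_rhoPotential]
  field_simp
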